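/- arXiv:2203.06056 — 2 statements merged into one kernel-verified Lean document; each statement's English description precedes it below -/
import Mathlib

section
/- Let J = J_{m₁}(λ₁) ⊕ … ⊕ J_{m_k}(λ_k) be a block Jordan matrix over ℂ whose blocks have pairwise distinct eigenvalues λ₁, …, λ_k. Then a vector v ∈ ℂ^{m₁+…+m_k} is cyclic for J if and only if for every d ∈ {1,…,k} the coordinate v_{m₁+…+m_d} (the last coordinate within the d-th block) is nonzero. -/
/-!
The coordinate at the end of block `d` is a left eigenvector of `J`: if it vanished at `v`, it
would vanish at every `J^i v`, and `n` independent such vectors span everything. Conversely,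
suppose those coordinates are nonzero and `p(J) v = 0`. On block `d`, write
`p = (X - λ_d)^r q` with `q(λ_d) ≠ 0`; if `r < m_d`, coordinate `m_d - 1 - r` of `p(J) v` is
`q(λ_d) v_{last}`, which is nonzero. So `(X - λ_d)^{m_d} ∣ p` for every `d`, these factors are
pairwise coprime, and `p` is a multiple of a polynomial of degree `n`: no nonzero polynomial of
degree `< n` annihilates `v`.
-/

def jordanBlock (m : ℕ) (lam : ℂ) : Matrix (Fin m) (Fin m) ℂ :=
  lam • 1 + Matrix.of (fun i j : Fin m => if (i : ℕ) + 1 = (j : ℕ) then (1 : ℂ) else 0)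

open Polynomial Matrix

section

variable {R : Type*} [CommRing R] {ι : Type*} [Fintype ι] [DecidableEq ι]

lemma aeval_mulVec_eq_sum_coeff_smul (A : Matrix ι ι R) (v : ι → R) {p : R[X]} {n : ℕ}
    (hp : p.natDegree < n) :
    aeval A p *ᵥ v = ∑ i : Fin n, p.coeff i • (A ^ (i : ℕ) *ᵥ v) := by
  simp only [aeval_eq_sum_range' hp, ← Fin.sum_univ_eq_sum_range, sum_mulVec, smul_mulVec]

lemma linearIndependent_pow_mulVec_of_natDegree_le (A : Matrix ι ι R) (v : ι → R) (n : ℕ)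
    (h : ∀ p : R[X], p ≠ 0 → aeval A p *ᵥ v = 0 → n ≤ p.natDegree) :
    LinearIndependent R fun i : Fin n => A ^ (i : ℕ) *ᵥ v := by
  rw [Fintype.linearIndependent_iff]
  intro c hc
  set p := (degreeLTEquiv R n).symm c
  have hcoeff (i : Fin n) : (p : R[X]).coeff i = c i :=
    congrFun ((degreeLTEquiv R n).apply_symm_apply c) i
  have hdeg : (p : R[X]).degree < n := mem_degreeLT.1 p.2
  suffices (p : R[X]) = 0 by intro i; rw [← hcoeff, this, coeff_zero]
  by_contra hp0
  have hlt : (p : R[X]).natDegree < n := (natDegree_lt_iff_degree_lt hp0).2 hdeg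
  refine (h p hp0 ?_).not_gt hlt
  simp only [aeval_mulVec_eq_sum_coeff_smul A v hlt, hcoeff, hc]

end

section

variable {K : Type*} [Field K] {ι : Type*} [Fintype ι] [DecidableEq ι]

lemma apply_ne_zero_of_linearIndependent_pow_mulVec {A : Matrix ι ι K} {v : ι → K} {x : ι}
    {c : K} {n : ℕ} (hn : Fintype.card ι = n) (hA : ∀ w, (A *ᵥ w) x = c * w x)
    (hv : LinearIndependent K fun i : Fin n => A ^ (i : ℕ) *ᵥ v) : v x ≠ 0 := by
  intro hvx
  have hpow : ∀ i : ℕ, (A ^ i *ᵥ v) x = 0 := by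
    intro i
    induction i with
    | zero => simpa using hvx
    | succ i ih => rw [pow_succ', ← mulVec_mulVec, hA, ih, mul_zero]
  have hspan : Submodule.span K (Set.range fun i : Fin n => A ^ (i : ℕ) *ᵥ v) = ⊤ :=
    hv.span_eq_top_of_card_eq_finrank' (by simp [hn])
  have hker : ⊤ ≤ LinearMap.ker (LinearMap.proj x : (ι → K) →ₗ[K] K) :=
    hspan ▸ Submodule.span_le.2 (by rintro _ ⟨i, rfl⟩; exact hpow i)
  simpa using hker (Submodule.mem_top (x := Pi.single x 1))

end

namespace Matrix

variable {R o : Type*} {ι : o → Type*} [Fintype o] [DecidableEq o] [∀ d, Fintype (ι d)]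

lemma blockDiagonal'_mulVec_apply [NonUnitalNonAssocSemiring R] (M : ∀ d, Matrix (ι d) (ι d) R)
    (v : (Σ d, ι d) → R) (d : o) (j : ι d) :
    (blockDiagonal' M *ᵥ v) ⟨d, j⟩ = (M d *ᵥ fun j' => v ⟨d, j'⟩) j := by
  rw [mulVec, dotProduct, ← Finset.univ_sigma_univ, Finset.sum_sigma,
    Finset.sum_eq_single_of_mem d (Finset.mem_univ d)]
  · simp [blockDiagonal'_apply_eq, mulVec, dotProduct]
  · intro e _ he
    exact Finset.sum_eq_zero fun j' _ => by rw [blockDiagonal'_apply_ne _ _ _ he.symm, zero_mul]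

variable [CommSemiring R] [∀ d, DecidableEq (ι d)]

variable (R ι) in
def blockDiagonal'AlgHom :
    (∀ d, Matrix (ι d) (ι d) R) →ₐ[R] Matrix (Σ d, ι d) (Σ d, ι d) R :=
  { blockDiagonal'RingHom ι R with
    commutes' := fun r => by
      simp [Algebra.algebraMap_eq_smul_one, ← blockDiagonal'_one, ← blockDiagonal'_smul] }

lemma aeval_blockDiagonal' (M : ∀ d, Matrix (ι d) (ι d) R) (p : R[X]) :
    aeval (blockDiagonal' M) p = blockDiagonal' fun d => aeval (M d) p := by
  rw [← aeval_pi_apply]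
  exact aeval_algHom_apply (blockDiagonal'AlgHom R ι) M p

end Matrix

def shiftMatrix (R : Type*) [Zero R] [One R] (m : ℕ) : Matrix (Fin m) (Fin m) R :=
  of fun i j => if (i : ℕ) + 1 = j then 1 else 0

section shiftMatrix

variable {R : Type*} [Semiring R] {m : ℕ}

lemma shiftMatrix_mulVec_apply (w : Fin m → R) (i : Fin m) :
    (shiftMatrix R m *ᵥ w) i = if h : (i : ℕ) + 1 < m then w ⟨i + 1, h⟩ else 0 := by
  rw [mulVec, dotProduct]
  split_ifs with h
  · rw [Finset.sum_eq_single_of_mem (⟨i + 1, h⟩ : Fin m) (Finset.mem_univ _)]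
    · simp [shiftMatrix]
    · intro j _ hj
      simp only [shiftMatrix, of_apply, ite_mul, one_mul, zero_mul]
      exact if_neg fun hij => hj (Fin.ext hij.symm)
  · refine Finset.sum_eq_zero fun j _ => ?_
    simp only [shiftMatrix, of_apply, ite_mul, one_mul, zero_mul]
    exact if_neg fun hij : (i : ℕ) + 1 = j => h (hij ▸ j.isLt)

lemma shiftMatrix_pow_mulVec_apply (r : ℕ) (w : Fin m → R) (i : Fin m) :
    (shiftMatrix R m ^ r *ᵥ w) i = if h : (i : ℕ) + r < m then w ⟨i + r, h⟩ else 0 := by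
  induction r generalizing i with
  | zero => simp
  | succ r ih =>
    rw [pow_succ', ← mulVec_mulVec, shiftMatrix_mulVec_apply]
    by_cases h : (i : ℕ) + 1 < m
    · rw [dif_pos h, ih]
      simp only [add_right_comm _ 1 r, add_assoc]
    · rw [dif_neg h, dif_neg (by omega)]

end shiftMatrix

section jordanBlock

variable {m : ℕ} {lam : ℂ}

lemma jordanBlock_eq_smul_one_add_shiftMatrix :
    jordanBlock m lam = lam • 1 + shiftMatrix ℂ m :=
  rfl

lemma aeval_jordanBlock_X_sub_C :
    aeval (jordanBlock m lam) (X - C lam) = shiftMatrix ℂ m := by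
  rw [map_sub, aeval_X, aeval_C, Algebra.algebraMap_eq_smul_one,
    jordanBlock_eq_smul_one_add_shiftMatrix, add_sub_cancel_left]

lemma jordanBlock_mulVec_apply_last (hm : 0 < m) (w : Fin m → ℂ) :
    (jordanBlock m lam *ᵥ w) ⟨m - 1, by omega⟩ = lam * w ⟨m - 1, by omega⟩ := by
  rw [jordanBlock_eq_smul_one_add_shiftMatrix, add_mulVec, smul_mulVec, one_mulVec, Pi.add_apply,
    shiftMatrix_mulVec_apply, dif_neg (by dsimp only; omega), add_zero, Pi.smul_apply, smul_eq_mul]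

lemma pow_X_sub_C_dvd_of_aeval_jordanBlock_mulVec_eq_zero (hm : 0 < m) {w : Fin m → ℂ}
    (hw : w ⟨m - 1, by omega⟩ ≠ 0) {p : ℂ[X]}
    (hp : aeval (jordanBlock m lam) p *ᵥ w = 0) :
    (X - C lam) ^ m ∣ p := by
  by_contra hdvd
  have hp0 : p ≠ 0 := by rintro rfl; exact hdvd (dvd_zero _)
  obtain ⟨q, hpq, hq⟩ := p.exists_eq_pow_rootMultiplicity_mul_and_not_dvd hp0 lam
  set r := p.rootMultiplicity lam
  have hr : r < m := lt_of_not_ge fun h => hdvd ((le_rootMultiplicity_iff hp0).1 h)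
  obtain ⟨q₁, hq₁⟩ := X_sub_C_dvd_sub_C_eval (a := lam) (p := q)
  have hpJ : aeval (jordanBlock m lam) p =
      q.eval lam • shiftMatrix ℂ m ^ r +
        shiftMatrix ℂ m ^ (r + 1) * aeval (jordanBlock m lam) q₁ := by
    conv_lhs => rw [hpq, eq_add_of_sub_eq' hq₁]
    simp only [map_mul, map_pow, map_add, aeval_C, aeval_jordanBlock_X_sub_C,
      Algebra.algebraMap_eq_smul_one, mul_add, mul_smul_comm, mul_one, pow_succ, mul_assoc]
  have := congrFun hp ⟨m - 1 - r, by omega⟩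
  rw [hpJ, add_mulVec, smul_mulVec, ← mulVec_mulVec, Pi.add_apply, Pi.smul_apply,
    shiftMatrix_pow_mulVec_apply, shiftMatrix_pow_mulVec_apply, dif_pos (by dsimp only; omega),
    dif_neg (by dsimp only; omega), add_zero, smul_eq_mul] at this
  exact mul_ne_zero (mt dvd_iff_isRoot.2 hq) (by convert hw using 3; dsimp only; omega) this

end jordanBlock

/-- for a block Jordan matrix with pairwise distinct eigenvalues, a
vector is cyclic iff its last coordinate within each block is nonzero. -/
theorem cyclic_iff_block_last_coords_ne_zero (k : ℕ) (m : Fin k → ℕ)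
    (hm : ∀ d, 0 < m d) (lam : Fin k → ℂ) (hlam : Function.Injective lam)
    (v : (Σ d : Fin k, Fin (m d)) → ℂ) :
    LinearIndependent ℂ (fun i : Fin (∑ d, m d) =>
        ((Matrix.blockDiagonal' (fun d => jordanBlock (m d) (lam d))) ^ (i : ℕ)).mulVec v)
      ↔ ∀ d : Fin k, v ⟨d, ⟨m d - 1, by have := hm d; omega⟩⟩ ≠ 0 := by
  constructor
  · intro hcyc d
    refine apply_ne_zero_of_linearIndependent_pow_mulVec (c := lam d) (by simp) (fun w => ?_) hcyc
    rw [blockDiagonal'_mulVec_apply, jordanBlock_mulVec_apply_last (hm d)]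
  · intro hv
    refine linearIndependent_pow_mulVec_of_natDegree_le _ _ _ fun p hp0 hpv => ?_
    have hdvd (d : Fin k) : (X - C (lam d)) ^ m d ∣ p := by
      refine pow_X_sub_C_dvd_of_aeval_jordanBlock_mulVec_eq_zero (hm d) (w := fun j => v ⟨d, j⟩)
        (hv d) (funext fun j => ?_)
      simpa [aeval_blockDiagonal', blockDiagonal'_mulVec_apply] using congrFun hpv ⟨d, j⟩
    have hprod : ∏ d, (X - C (lam d)) ^ m d ∣ p :=
      Finset.prod_dvd_of_coprime (fun a _ b _ hab => (pairwise_coprime_X_sub_C hlam hab).pow)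
        fun d _ => hdvd d
    have hdeg : (∏ d, (X - C (lam d)) ^ m d).natDegree = ∑ d, m d := by
      rw [natDegree_prod_of_monic _ _ fun d _ => (monic_X_sub_C _).pow _]
      simp
    exact hdeg ▸ natDegree_le_of_dvd hprod hp0
end

section
/- Define the 4×4 real matrices A₁ and A₂ by A₁ having nonzero entries (A₁)_{1,1}=a, (A₁)_{2,1}=c, (A₁)_{3,1}=c, (A₁)_{4,2}=b, and A₂ having nonzero entries (A₂)_{1,1}=a, (A₂)_{2,2}=a, (A₂)_{3,2}=c, (A₂)_{4,3}=b (all other entries zero). Then for all natural numbers k ≥ 2 and s ≥ 0, the bottom-right 2×2 submatrices of A₁^{k+s}·(A₁^k)ᵀ and A₂^{k+s}·(A₂^k)ᵀ are equal. -/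
/-!
For `n ≥ 2` the rows 3 and 4 of `A₁ⁿ` are `c aⁿ⁻¹ e₁ᵀ` and `b c aⁿ⁻² e₁ᵀ`, while those of
`A₂ⁿ` are the same multiples of `e₂ᵀ`. Each entry of the bottom-right block of `Aᵏ⁺ˢ (Aᵏ)ᵀ` is
an inner product of such rows, so both matrices give the same block.
-/

open Matrix

/-- The first parameter matrix of the observational-equivalence example. -/
def stmtA₁ (a b c : ℝ) : Matrix (Fin 4) (Fin 4) ℝ :=
  !![a, 0, 0, 0; c, 0, 0, 0; c, 0, 0, 0; 0, b, 0, 0]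

/-- The second parameter matrix of the observational-equivalence example. -/
def stmtA₂ (a b c : ℝ) : Matrix (Fin 4) (Fin 4) ℝ :=
  !![a, 0, 0, 0; 0, a, 0, 0; 0, c, 0, 0; 0, 0, b, 0]

theorem stmtA₁_pow_add_two (a b c : ℝ) (n : ℕ) :
    stmtA₁ a b c ^ (n + 2) =
      !![a ^ (n + 2), 0, 0, 0; c * a ^ (n + 1), 0, 0, 0;
         c * a ^ (n + 1), 0, 0, 0; b * c * a ^ n, 0, 0, 0] := by
  induction n with
  | zero =>
    ext i j
    fin_cases i <;> fin_cases j <;> simp [stmtA₁, sq, mul_apply, Fin.sum_univ_four]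
  | succ n ih =>
    rw [pow_succ, ih]
    ext i j
    fin_cases i <;> fin_cases j <;> simp [stmtA₁, mul_apply, Fin.sum_univ_four] <;> ring

theorem stmtA₂_pow_add_two (a b c : ℝ) (n : ℕ) :
    stmtA₂ a b c ^ (n + 2) =
      !![a ^ (n + 2), 0, 0, 0; 0, a ^ (n + 2), 0, 0;
         0, c * a ^ (n + 1), 0, 0; 0, b * c * a ^ n, 0, 0] := by
  induction n with
  | zero =>
    ext i j
    fin_cases i <;> fin_cases j <;> simp [stmtA₂, sq, mul_apply, Fin.sum_univ_four]
  | succ n ih =>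
    rw [pow_succ, ih]
    ext i j
    fin_cases i <;> fin_cases j <;> simp [stmtA₂, mul_apply, Fin.sum_univ_four] <;> ring

/-- the bottom-right 2×2 submatrices of `A₁^{k+s}(A₁^k)ᵀ` and
`A₂^{k+s}(A₂^k)ᵀ` agree for all `k ≥ 2` and `s ≥ 0`. -/
theorem observational_equivalence (a b c : ℝ) (k s : ℕ) (hk : 2 ≤ k)
    (i j : Fin 4) (hi : 2 ≤ (i : ℕ)) (hj : 2 ≤ (j : ℕ)) :
    (stmtA₁ a b c ^ (k + s) * (stmtA₁ a b c ^ k)ᵀ) i j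
      = (stmtA₂ a b c ^ (k + s) * (stmtA₂ a b c ^ k)ᵀ) i j := by
  obtain ⟨n, rfl⟩ := Nat.exists_eq_add_of_le' hk
  rw [add_right_comm, stmtA₁_pow_add_two, stmtA₁_pow_add_two, stmtA₂_pow_add_two,
    stmtA₂_pow_add_two]
  fin_cases i <;> fin_cases j <;> simp_all [mul_apply, Fin.sum_univ_four]
end
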